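/- arXiv:math/0604082 — 4 statements merged into one kernel-verified Lean document; each statement's English description precedes it below -/
import Mathlib

section
/- Let β_1,...,β_n > 1, let Q = (q_{j,j'}) be an n×n symmetric positive semidefinite matrix with q_{j,j} = 1, and let r_1,...,r_n ≥ 0 be the eigenvalues of Q̃ = (√(β_j β_{j'}) q_{j,j'}). If r_j ≥ 1 for all j ≤ n, then ½ Σ_{j≤n} (f(r_j) − log β_j) = Σ_{j≤n} P(β_j). If all r_j > 0 and min_{j≤n} r_j < 1, then ½ Σ_{j≤n} (f(r_j) − log β_j) < Σ_{j≤n} P(β_j). -/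
/-! The eigenvalues of `Q̃` sum to its trace `∑ β_j`, and `f(r) ≤ 2r - 3/2` for `r > 0`, with
equality exactly when `r ≥ 1`. Replacing each `f(r_j)` by `2 r_j - 3/2` therefore turns the left
side into `∑ P(β_j)`, and does not decrease it, strictly so as soon as some `r_j < 1`. -/

open MeasureTheory ProbabilityTheory Filter Matrix Topology

noncomputable def stdGaussianPi (N : ℕ) : Measure (Fin N → ℝ) :=
  Measure.pi fun _ => gaussianReal 0 1

instance stdGaussianPi.isProb (N : ℕ) : IsProbabilityMeasure (stdGaussianPi N) := by
  unfold stdGaussianPi; infer_instance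

noncomputable def sphereUniform (N : ℕ) : Measure (Fin N → ℝ) :=
  (stdGaussianPi N).map fun x i => Real.sqrt N / Real.sqrt (∑ j, (x j) ^ 2) * x i

instance sphereUniform.isProb (N : ℕ) : IsProbabilityMeasure (sphereUniform N) := by
  rw [sphereUniform]
  refine Measure.isProbabilityMeasure_map (Measurable.aemeasurable ?_)
  refine measurable_pi_lambda _ fun i => Measurable.mul ?_ (measurable_pi_apply i)
  refine Measurable.div measurable_const ?_
  exact (Finset.measurable_sum Finset.univ fun j _ => (measurable_pi_apply j).pow_const 2).sqrt

noncomputable def overlap {N : ℕ} (σ ρ : Fin N → ℝ) : ℝ :=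
  (N : ℝ)⁻¹ * ∑ i, σ i * ρ i

def onSphere {N : ℕ} (σ : Fin N → ℝ) : Prop :=
  ∑ i, (σ i) ^ 2 = (N : ℝ)

noncomputable def disorder2 (N : ℕ) : Measure (Fin N → Fin N → ℝ) :=
  Measure.pi fun _ => Measure.pi fun _ => gaussianReal 0 1

instance disorder2.isProb (N : ℕ) : IsProbabilityMeasure (disorder2 N) := by
  unfold disorder2; infer_instance

noncomputable def ham2 (N : ℕ) (g : Fin N → Fin N → ℝ) (σ : Fin N → ℝ) : ℝ :=
  (Real.sqrt (2 * N))⁻¹ * ∑ i, ∑ j, g i j * σ i * σ j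

/-- f(r) = log r + r²/2 for r ≤ 1 and 2r − 3/2 for r ≥ 1. -/
noncomputable def fOrd (r : ℝ) : ℝ := if r ≤ 1 then Real.log r + r ^ 2 / 2 else 2 * r - 3 / 2

/-- P(β) = ½(2β − 3/2 − log β), the free energy of a single pure 2-spin spherical
system at inverse temperature β > 1. -/
noncomputable def Pfe (β : ℝ) : ℝ := (1 / 2) * (2 * β - 3 / 2 - Real.log β)

open Real

theorem fOrd_of_one_le {r : ℝ} (hr : 1 ≤ r) : fOrd r = 2 * r - 3 / 2 := by
  rcases hr.eq_or_lt with rfl | hr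
  · norm_num [fOrd]
  · rw [fOrd, if_neg hr.not_ge]

theorem strictMonoOn_log_add_sq_div_two_sub_two_mul :
    StrictMonoOn (fun r : ℝ => log r + r ^ 2 / 2 - 2 * r) (Set.Ioc 0 1) := by
  refine strictMonoOn_of_deriv_pos (convex_Ioc 0 1) ?_ fun r hr => ?_
  · exact ((continuousOn_log.mono fun r hr => hr.1.ne').add (by fun_prop)).sub (by fun_prop)
  rw [interior_Ioc] at hr
  have hr₀ : r ≠ 0 := hr.1.ne'
  have hderiv : HasDerivAt (fun r : ℝ => log r + r ^ 2 / 2 - 2 * r) ((r - 1) ^ 2 / r) r := by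
    refine (((hasDerivAt_log hr₀).add ((hasDerivAt_pow 2 r).div_const 2)).sub
      ((hasDerivAt_id r).const_mul 2)).congr_deriv ?_
    field_simp
    ring
  rw [hderiv.deriv]
  exact div_pos (pow_two_pos_of_ne_zero (sub_ne_zero.2 hr.2.ne)) hr.1

theorem fOrd_lt_of_lt_one {r : ℝ} (hr₀ : 0 < r) (hr₁ : r < 1) : fOrd r < 2 * r - 3 / 2 := by
  have := strictMonoOn_log_add_sq_div_two_sub_two_mul ⟨hr₀, hr₁.le⟩ ⟨one_pos, le_rfl⟩ hr₁
  rw [fOrd, if_pos hr₁.le]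
  norm_num at this
  linarith

theorem fOrd_le {r : ℝ} (hr : 0 < r) : fOrd r ≤ 2 * r - 3 / 2 := by
  rcases le_or_gt 1 r with h | h
  · exact (fOrd_of_one_le h).le
  · exact (fOrd_lt_of_lt_one hr h).le

theorem sum_eigenvalues_eq_sum_diag {ι : Type*} [Fintype ι] [DecidableEq ι]
    {A : Matrix ι ι ℝ} (hA : A.IsHermitian) : ∑ i, hA.eigenvalues i = ∑ i, A i i := by
  simpa [Matrix.trace] using hA.trace_eq_sum_eigenvalues.symm

theorem half_sum_two_mul_sub_log_eq_sum_Pfe {ι : Type*} [Fintype ι] {r β : ι → ℝ}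
    (h : ∑ i, r i = ∑ i, β i) :
    (1 / 2) * ∑ i, (2 * r i - 3 / 2 - log (β i)) = ∑ i, Pfe (β i) := by
  simp only [Pfe, ← Finset.mul_sum, Finset.sum_sub_distrib, h]

theorem stmt1_general (n : ℕ) (β : Fin n → ℝ) (hβ : ∀ j, 1 < β j)
    (Q : Matrix (Fin n) (Fin n) ℝ) (hQdiag : ∀ j, Q j j = 1)
    (Qt : Matrix (Fin n) (Fin n) ℝ)
    (hQt : ∀ j j', Qt j j' = Real.sqrt (β j * β j') * Q j j')
    (hQth : Qt.IsHermitian) :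
    ((∀ j, 1 ≤ hQth.eigenvalues j) →
      (1 / 2) * ∑ j, (fOrd (hQth.eigenvalues j) - Real.log (β j)) = ∑ j, Pfe (β j)) ∧
    ((∀ j, 0 < hQth.eigenvalues j) → (∃ j, hQth.eigenvalues j < 1) →
      (1 / 2) * ∑ j, (fOrd (hQth.eigenvalues j) - Real.log (β j)) < ∑ j, Pfe (β j)) := by
  set r := hQth.eigenvalues
  have htrace : ∑ j, r j = ∑ j, β j := by
    rw [sum_eigenvalues_eq_sum_diag]
    refine Finset.sum_congr rfl fun j _ => ?_
    rw [hQt, hQdiag, mul_one, sqrt_mul_self (zero_le_one.trans (hβ j).le)]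
  rw [← half_sum_two_mul_sub_log_eq_sum_Pfe htrace]
  refine ⟨fun hr => ?_, fun hr ⟨j₀, hj₀⟩ => ?_⟩
  · simp only [fOrd_of_one_le (hr _)]
  · refine mul_lt_mul_of_pos_left ?_ one_half_pos
    refine Finset.sum_lt_sum (fun j _ => ?_) ⟨j₀, Finset.mem_univ _, ?_⟩
    · linarith [fOrd_le (hr j)]
    · linarith [fOrd_lt_of_lt_one (hr j₀) hj₀]

theorem stmt1 (n : ℕ) (hn : 1 ≤ n) (β : Fin n → ℝ) (hβ : ∀ j, 1 < β j)
    (Q : Matrix (Fin n) (Fin n) ℝ) (hQ : Q.PosSemidef) (hQdiag : ∀ j, Q j j = 1)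
    (Qt : Matrix (Fin n) (Fin n) ℝ)
    (hQt : ∀ j j', Qt j j' = Real.sqrt (β j * β j') * Q j j')
    (hQth : Qt.IsHermitian)
    (hr0 : ∀ j, 0 ≤ hQth.eigenvalues j) :
    ((∀ j, 1 ≤ hQth.eigenvalues j) →
      (1 / 2) * ∑ j, (fOrd (hQth.eigenvalues j) - Real.log (β j)) = ∑ j, Pfe (β j)) ∧
    ((∀ j, 0 < hQth.eigenvalues j) → (∃ j, hQth.eigenvalues j < 1) →
      (1 / 2) * ∑ j, (fOrd (hQth.eigenvalues j) - Real.log (β j)) < ∑ j, Pfe (β j)) :=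
  stmt1_general n β hβ Q hQdiag Qt hQt hQth
end

section
/- The function g(x) = ((1+x)/x²) log(1+x) − 1/x is convex and strictly decreasing on (0,∞), with g(x) → 1/2 as x → 0⁺ and g(x) → 0 as x → ∞. Consequently, for every integer p ≥ 3 there exists a unique x > 0 such that g(x) = 1/p. -/
/-!
The estimates all come from the series `log (1 + x) = 2 ∑ t ^ (2k+1) / (2k+1)`, `t = x / (x + 2)`,
and from `log y ≤ sinh (log y) = (y - y⁻¹) / 2` for `y ≥ 1`. The first term of the series gives
`log (1 + x) > 2x / (x + 2)`, which is the sign of `g'` and the lower bound `g x > 1 / (x + 2)`;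
the first two terms give the sign of `g''`; the `sinh` bound gives `g x ≤ 1 / 2`, so `g → 1 / 2`
at `0⁺` by squeezing. A continuous strictly decreasing function running from `1 / 2` down to `0`
takes each value `1 / p ∈ (0, 1 / 2)` exactly once.
-/

open Filter Topology

/-- g(x) = ((1+x)/x²) log(1+x) − 1/x. -/
noncomputable def gFun (x : ℝ) : ℝ := (1 + x) / x ^ 2 * Real.log (1 + x) - 1 / x

open Real Set

theorem existsUnique_eq_of_strictAntiOn_of_tendsto {α δ : Type*}
    [ConditionallyCompleteLinearOrder α] [TopologicalSpace α] [OrderTopology α]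
    [DenselyOrdered α] [NoMaxOrder α] [LinearOrder δ] [TopologicalSpace δ]
    [OrderClosedTopology δ] {f : α → δ} {a : α} {l m c : δ}
    (hcont : ContinuousOn f (Ioi a)) (hanti : StrictAntiOn f (Ioi a))
    (hl : Tendsto f (𝓝[>] a) (𝓝 l)) (hm : Tendsto f atTop (𝓝 m)) (hmc : m < c) (hcl : c < l) :
    ∃! x, a < x ∧ f x = c := by
  obtain ⟨u, hcu, hau⟩ := ((hl.eventually_const_lt hcl).and self_mem_nhdsWithin).exists
  obtain ⟨v, hvc, huv⟩ := ((hm.eventually_lt_const hmc).and (eventually_gt_atTop u)).exists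
  have hsub : Icc u v ⊆ Ioi a := fun y hy => lt_of_lt_of_le hau hy.1
  obtain ⟨x, hx, hfx⟩ := intermediate_value_Icc' huv.le (hcont.mono hsub) ⟨hvc.le, hcu.le⟩
  exact ⟨x, ⟨hsub hx, hfx⟩, fun y ⟨hay, hfy⟩ => hanti.injOn hay (hsub hx) (hfy.trans hfx.symm)⟩

lemma two_mul_add_cube_le_log_one_add {a : ℝ} (ha : 0 ≤ a) :
    2 * (a / (a + 2)) + 2 / 3 * (a / (a + 2)) ^ 3 ≤ log (1 + a) := by
  have h := sum_le_hasSum (Finset.range 2) (fun k _ => by positivity) (hasSum_log_one_add ha)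
  norm_num [Finset.sum_range_succ] at h
  linarith

lemma two_mul_div_add_two_lt_log_one_add {a : ℝ} (ha : 0 < a) :
    2 * a / (a + 2) < log (1 + a) := by
  have h := two_mul_add_cube_le_log_one_add ha.le
  have ht : 0 < a / (a + 2) := by positivity
  rw [mul_div_assoc]
  nlinarith [pow_pos ht 3]

lemma div_one_add_le_mul_log_one_add {x : ℝ} (hx : 0 ≤ x) :
    (5 * x ^ 2 + 6 * x) / (1 + x) ≤ (2 * x + 6) * log (1 + x) := by
  refine le_trans ?_
    (mul_le_mul_of_nonneg_left (two_mul_add_cube_le_log_one_add hx) (by positivity))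
  rw [div_le_iff₀ (by positivity)]
  field_simp
  nlinarith [pow_nonneg hx 4, pow_nonneg hx 5]

lemma log_le_sub_inv_div_two {y : ℝ} (hy : 1 ≤ y) : log y ≤ (y - y⁻¹) / 2 := by
  rw [← sinh_log (by positivity)]
  exact self_le_sinh_iff.2 (log_nonneg hy)

lemma hasDerivAt_log_one_add {x : ℝ} (hx : -1 < x) :
    HasDerivAt (fun y => log (1 + y)) (1 / (1 + x)) x := by
  simpa using ((hasDerivAt_id' x).const_add 1).log (by linarith)

lemma gFun_eq {x : ℝ} (hx : x ≠ 0) : gFun x = ((1 + x) * log (1 + x) - x) / x ^ 2 := by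
  unfold gFun
  field_simp

lemma hasDerivAt_gFun {x : ℝ} (hx : 0 < x) :
    HasDerivAt gFun ((2 * x - (x + 2) * log (1 + x)) / x ^ 3) x := by
  have h := ((((hasDerivAt_id' x).const_add 1).div (hasDerivAt_pow 2 x) (by positivity)).mul
    (hasDerivAt_log_one_add (by linarith))).sub
    ((hasDerivAt_const x 1).div (hasDerivAt_id' x) hx.ne')
  refine h.congr_deriv ?_
  simp only [Pi.div_apply]
  push_cast
  field_simp
  ring

lemma hasDerivAt_deriv_gFun {x : ℝ} (hx : 0 < x) :
    HasDerivAt (fun y => (2 * y - (y + 2) * log (1 + y)) / y ^ 3)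
      (((2 * x + 6) * log (1 + x) - (5 * x ^ 2 + 6 * x) / (1 + x)) / x ^ 4) x := by
  have h := (((hasDerivAt_id' x).const_mul 2).sub (((hasDerivAt_id' x).add_const 2).mul
    (hasDerivAt_log_one_add (by linarith)))).div (hasDerivAt_pow 3 x) (by positivity)
  refine h.congr_deriv ?_
  have : 1 + x ≠ 0 := by positivity
  simp only [Pi.sub_apply, Pi.mul_apply]
  push_cast
  field_simp
  ring

lemma continuousOn_gFun : ContinuousOn gFun (Ioi 0) :=
  fun _ hx => (hasDerivAt_gFun hx).continuousAt.continuousWithinAt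

lemma strictAntiOn_gFun : StrictAntiOn gFun (Ioi 0) := by
  refine strictAntiOn_of_hasDerivWithinAt_neg (convex_Ioi 0) continuousOn_gFun
    (fun x hx => (hasDerivAt_gFun (interior_subset hx)).hasDerivWithinAt) fun x hx => ?_
  rw [interior_Ioi, mem_Ioi] at hx
  have h := two_mul_div_add_two_lt_log_one_add hx
  rw [div_lt_iff₀ (by positivity)] at h
  exact div_neg_of_neg_of_pos (by linarith) (by positivity)

lemma convexOn_gFun : ConvexOn ℝ (Ioi 0) gFun := by
  refine convexOn_of_hasDerivWithinAt2_nonneg (convex_Ioi 0) continuousOn_gFun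
    (fun x hx => (hasDerivAt_gFun (interior_subset hx)).hasDerivWithinAt)
    (fun x hx => (hasDerivAt_deriv_gFun (interior_subset hx)).hasDerivWithinAt) fun x hx => ?_
  rw [interior_Ioi, mem_Ioi] at hx
  have h := div_one_add_le_mul_log_one_add hx.le
  exact div_nonneg (by linarith) (by positivity)

lemma one_div_add_two_lt_gFun {x : ℝ} (hx : 0 < x) : 1 / (x + 2) < gFun x := by
  rw [gFun_eq hx.ne', lt_div_iff₀ (by positivity), div_mul_eq_mul_div,
    div_lt_iff₀ (by positivity)]
  have h := two_mul_div_add_two_lt_log_one_add hx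
  rw [div_lt_iff₀ (by positivity)] at h
  nlinarith

lemma gFun_le_one_half {x : ℝ} (hx : 0 < x) : gFun x ≤ 1 / 2 := by
  rw [gFun_eq hx.ne', div_le_iff₀ (by positivity)]
  have h1 : (0 : ℝ) < 1 + x := by positivity
  have h := mul_le_mul_of_nonneg_left (log_le_sub_inv_div_two (by linarith : (1 : ℝ) ≤ 1 + x)) h1.le
  have hsinh : (1 + x) * ((1 + x - (1 + x)⁻¹) / 2) = x + x ^ 2 / 2 := by
    field_simp
    ring
  linarith

lemma tendsto_gFun_nhdsGT_zero : Tendsto gFun (𝓝[>] 0) (𝓝 (1 / 2)) := by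
  have hlow : Tendsto (fun x : ℝ => 1 / (x + 2)) (𝓝[>] 0) (𝓝 (1 / 2)) := by
    have : ContinuousAt (fun x : ℝ => 1 / (x + 2)) 0 := by fun_prop (disch := norm_num)
    simpa using this.tendsto.mono_left nhdsWithin_le_nhds
  refine tendsto_of_tendsto_of_tendsto_of_le_of_le' hlow tendsto_const_nhds ?_ ?_
  · filter_upwards [self_mem_nhdsWithin] with x hx using (one_div_add_two_lt_gFun hx).le
  · filter_upwards [self_mem_nhdsWithin] with x hx using gFun_le_one_half hx

lemma tendsto_gFun_atTop : Tendsto gFun atTop (𝓝 0) := by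
  have hlog : Tendsto (fun x : ℝ => log (1 + x) / x) atTop (𝓝 0) := by
    have := (tendsto_pow_log_div_mul_add_atTop 1 (-1) 1 one_ne_zero).comp
      (tendsto_atTop_add_const_left atTop 1 tendsto_id)
    exact this.congr fun x => by simp
  have := ((tendsto_inv_atTop_zero.add_const 1).mul hlog).sub tendsto_inv_atTop_zero
  rw [zero_add, one_mul, sub_zero] at this
  refine this.congr' ?_
  filter_upwards [eventually_ne_atTop 0] with x hx
  unfold gFun
  field_simp

theorem stmt11 :
    ConvexOn ℝ (Set.Ioi (0 : ℝ)) gFun ∧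
    StrictAntiOn gFun (Set.Ioi (0 : ℝ)) ∧
    Tendsto gFun (𝓝[>] (0 : ℝ)) (𝓝 (1 / 2)) ∧
    Tendsto gFun atTop (𝓝 0) ∧
    ∀ p : ℕ, 3 ≤ p → ∃! x : ℝ, 0 < x ∧ gFun x = 1 / p := by
  refine ⟨convexOn_gFun, strictAntiOn_gFun, tendsto_gFun_nhdsGT_zero, tendsto_gFun_atTop,
    fun p hp => ?_⟩
  have hp3 : (3 : ℝ) ≤ p := by exact_mod_cast hp
  exact existsUnique_eq_of_strictAntiOn_of_tendsto continuousOn_gFun strictAntiOn_gFun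
    tendsto_gFun_nhdsGT_zero tendsto_gFun_atTop (by positivity)
    (one_div_lt_one_div_of_lt (by norm_num) (by linarith))
end

section
/- Let p ≥ 4 be an even integer and let x > 0 be the unique positive solution of 1/p = ((1+x)/x²) log(1+x) − 1/x. Define, for c ∈ [0,1], D(c) = x c^{p−1} − log(1 + x c^{p−1}) − ((p−1)/p)(x²/(1+x)) c^p. Then D(0) = 0, D(1) = 0, and D(c) < 0 for every c ∈ (0,1). -/
/-!
For `c > 0`, `D'(c)` is a positive multiple of `h(c) = (1 + x) c^(p-2) - 1 - x c^(p-1)`. Since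
`h'(c) = c^(p-3) ((p-2)(1+x) - (p-1) x c)`, `h` increases up to one point and decreases after it,
and `h(1) = 0`; hence for each `c ∈ (0,1)` either `h < 0` on `(0,c)` or `h > 0` on `(c,1)`, so `D`
decreases on `[0,c]` or increases on `[c,1]`. The equation defining `x` says exactly `D(1) = 0`,
and with `D(0) = 0` this gives `D(c) < 0`.
-/

open Real Set

theorem neg_of_hasDerivAt_of_sign_split {f f' : ℝ → ℝ} {a b : ℝ}
    (hf : ContinuousOn f (Icc a b)) (hderiv : ∀ d ∈ Ioo a b, HasDerivAt f (f' d) d)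
    (ha : f a ≤ 0) (hb : f b ≤ 0)
    (hsign : ∀ c ∈ Ioo a b, (∀ d ∈ Ioo a c, f' d < 0) ∨ (∀ d ∈ Ioo c b, 0 < f' d))
    {c : ℝ} (hc : c ∈ Ioo a b) : f c < 0 := by
  rcases hsign c hc with hneg | hpos
  · have hanti : StrictAntiOn f (Icc a c) := by
      refine strictAntiOn_of_deriv_neg (convex_Icc a c)
        (hf.mono (Icc_subset_Icc_right hc.2.le)) fun d hd => ?_
      rw [interior_Icc] at hd
      rw [(hderiv d ⟨hd.1, hd.2.trans hc.2⟩).deriv]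
      exact hneg d hd
    linarith [hanti (left_mem_Icc.2 hc.1.le) (right_mem_Icc.2 hc.1.le) hc.1]
  · have hmono : StrictMonoOn f (Icc c b) := by
      refine strictMonoOn_of_deriv_pos (convex_Icc c b)
        (hf.mono (Icc_subset_Icc_left hc.1.le)) fun d hd => ?_
      rw [interior_Icc] at hd
      rw [(hderiv d ⟨hc.1.trans hd.1, hd.2⟩).deriv]
      exact hpos d hd
    linarith [hmono (left_mem_Icc.2 hc.2.le) (right_mem_Icc.2 hc.2.le) hc.2]

theorem StrictMonoOn.sign_split_of_strictAntiOn {g : ℝ → ℝ} {a m b : ℝ}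
    (hmono : StrictMonoOn g (Icc a m)) (hanti : StrictAntiOn g (Icc m b)) (hb : 0 ≤ g b)
    {c : ℝ} (hc : c ∈ Ioo a b) : (∀ d ∈ Ioo a c, g d < 0) ∨ (∀ d ∈ Ioo c b, 0 < g d) := by
  by_cases hgc : 0 < g c
  · refine Or.inr fun d hd => ?_
    rcases le_or_gt d m with hdm | hmd
    · exact hgc.trans (hmono ⟨hc.1.le, hd.1.le.trans hdm⟩ ⟨(hc.1.trans hd.1).le, hdm⟩ hd.1)
    · exact hb.trans_lt (hanti ⟨hmd.le, hd.2.le⟩ ⟨(hmd.trans hd.2).le, le_rfl⟩ hd.2)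
  · have hcm : c ≤ m := by
      by_contra! hmc
      exact hgc (hb.trans_lt (hanti ⟨hmc.le, hc.2.le⟩ ⟨(hmc.trans hc.2).le, le_rfl⟩ hc.2))
    exact Or.inl fun d hd =>
      (hmono ⟨hd.1.le, hd.2.le.trans hcm⟩ ⟨hc.1.le, hcm⟩ hd.2).trans_le (not_lt.1 hgc)

/-- The function `D` of the statement for `p = k + 3`. -/
noncomputable def deficit (x : ℝ) (k : ℕ) (c : ℝ) : ℝ :=
  x * c ^ (k + 2) - log (1 + x * c ^ (k + 2)) - (k + 2) / (k + 3) * (x ^ 2 / (1 + x)) * c ^ (k + 3)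

def deficitFactor (x : ℝ) (k : ℕ) (c : ℝ) : ℝ :=
  (1 + x) * c ^ (k + 1) - 1 - x * c ^ (k + 2)

section

variable {x : ℝ} {k : ℕ}

theorem hasDerivAt_deficitFactor (c : ℝ) :
    HasDerivAt (deficitFactor x k) (c ^ k * ((k + 1) * (1 + x) - (k + 2) * x * c)) c := by
  have h1 := ((hasDerivAt_pow (k + 1) c).const_mul (1 + x)).sub_const 1
  have h2 := (hasDerivAt_pow (k + 2) c).const_mul x
  refine (h1.sub h2).congr_deriv ?_
  simp only [Nat.add_sub_cancel]
  push_cast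
  ring

theorem strictMonoOn_deficitFactor (hx : 0 < x) :
    StrictMonoOn (deficitFactor x k) (Icc 0 ((k + 1) * (1 + x) / ((k + 2) * x))) := by
  refine strictMonoOn_of_deriv_pos (convex_Icc _ _)
    (fun d _ => (hasDerivAt_deficitFactor d).continuousAt.continuousWithinAt) fun d hd => ?_
  rw [interior_Icc] at hd
  rw [(hasDerivAt_deficitFactor d).deriv]
  have hden : 0 < ((k : ℝ) + 2) * x := by positivity
  have := hd.2
  rw [lt_div_iff₀ hden] at this
  exact mul_pos (pow_pos hd.1 k) (by linarith)

theorem strictAntiOn_deficitFactor (hx : 0 < x) :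
    StrictAntiOn (deficitFactor x k) (Ici ((k + 1) * (1 + x) / ((k + 2) * x))) := by
  have hden : 0 < ((k : ℝ) + 2) * x := by positivity
  have hpeak : 0 < ((k : ℝ) + 1) * (1 + x) / ((k + 2) * x) := by positivity
  refine strictAntiOn_of_deriv_neg (convex_Ici _)
    (fun d _ => (hasDerivAt_deficitFactor d).continuousAt.continuousWithinAt) fun d hd => ?_
  rw [interior_Ici] at hd
  rw [(hasDerivAt_deficitFactor d).deriv]
  have := hd.out
  rw [div_lt_iff₀ hden] at this
  exact mul_neg_of_pos_of_neg (pow_pos (hpeak.trans hd) k) (by linarith)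

theorem deficitFactor_one : deficitFactor x k 1 = 0 := by
  simp [deficitFactor]

theorem hasDerivAt_deficit (hx : 0 < x) {c : ℝ} (hc : 0 ≤ c) :
    HasDerivAt (deficit x k)
      ((k + 2) * x ^ 2 * c ^ (k + 2) / ((1 + x * c ^ (k + 2)) * (1 + x)) * deficitFactor x k c)
      c := by
  have hu : 0 < 1 + x * c ^ (k + 2) := by positivity
  have h1 := (hasDerivAt_pow (k + 2) c).const_mul x
  have h2 := (h1.const_add 1).log hu.ne'
  have h3 := (hasDerivAt_pow (k + 3) c).const_mul ((k + 2) / (k + 3) * (x ^ 2 / (1 + x)))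
  refine ((h1.sub h2).sub h3).congr_deriv ?_
  simp only [deficitFactor, ]
  push_cast
  field_simp
  ring

theorem deficit_zero : deficit x k 0 = 0 := by
  simp [deficit]

theorem deficit_one (hx : 0 < x)
    (hxeq : 1 / ((k : ℝ) + 3) = (1 + x) / x ^ 2 * log (1 + x) - 1 / x) :
    deficit x k 1 = 0 := by
  have hlog : log (1 + x) = (1 / ((k : ℝ) + 3) + 1 / x) * (x ^ 2 / (1 + x)) := by
    rw [hxeq]
    field_simp
    ring
  rw [deficit, one_pow, mul_one, one_pow, mul_one, hlog]
  field_simp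
  ring

theorem deficit_neg (hx : 0 < x)
    (hxeq : 1 / ((k : ℝ) + 3) = (1 + x) / x ^ 2 * log (1 + x) - 1 / x)
    {c : ℝ} (hc : c ∈ Ioo 0 1) : deficit x k c < 0 := by
  have hscale : ∀ d : ℝ, 0 < d →
      0 < (k + 2) * x ^ 2 * d ^ (k + 2) / ((1 + x * d ^ (k + 2)) * (1 + x)) :=
    fun d hd => by positivity
  refine neg_of_hasDerivAt_of_sign_split
    (fun d hd => (hasDerivAt_deficit hx hd.1).continuousAt.continuousWithinAt)
    (fun d hd => hasDerivAt_deficit hx hd.1.le) deficit_zero.le (deficit_one hx hxeq).le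
    (fun c hc => ?_) hc
  exact ((strictMonoOn_deficitFactor hx).sign_split_of_strictAntiOn
    ((strictAntiOn_deficitFactor hx).mono Icc_subset_Ici_self) deficitFactor_one.ge hc).imp
    (fun hneg d hd => mul_neg_of_pos_of_neg (hscale d hd.1) (hneg d hd))
    (fun hpos d hd => mul_pos (hscale d (hc.1.trans hd.1)) (hpos d hd))

end

theorem stmt12_general (p : ℕ) (hp : 4 ≤ p) (x : ℝ) (hx : 0 < x)
    (hxeq : 1 / (p : ℝ) = (1 + x) / x ^ 2 * Real.log (1 + x) - 1 / x)
    (D : ℝ → ℝ)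
    (hD : ∀ c, D c = x * c ^ (p - 1) - Real.log (1 + x * c ^ (p - 1))
      - ((p : ℝ) - 1) / p * (x ^ 2 / (1 + x)) * c ^ p) :
    D 0 = 0 ∧ D 1 = 0 ∧ ∀ c ∈ Set.Ioo (0 : ℝ) 1, D c < 0 := by
  obtain ⟨k, rfl⟩ : ∃ k, p = k + 3 := ⟨p - 3, by omega⟩
  have hDk : D = deficit x k := funext fun c => by
    rw [hD, deficit, show k + 3 - 1 = k + 2 from rfl]
    push_cast
    ring
  push_cast at hxeq
  subst hDk
  exact ⟨deficit_zero, deficit_one hx hxeq, fun c hc => deficit_neg hx hxeq hc⟩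

theorem stmt12 (p : ℕ) (hp : 4 ≤ p) (hpe : Even p) (x : ℝ) (hx : 0 < x)
    (hxeq : 1 / (p : ℝ) = (1 + x) / x ^ 2 * Real.log (1 + x) - 1 / x)
    (D : ℝ → ℝ)
    (hD : ∀ c, D c = x * c ^ (p - 1) - Real.log (1 + x * c ^ (p - 1))
      - ((p : ℝ) - 1) / p * (x ^ 2 / (1 + x)) * c ^ p) :
    D 0 = 0 ∧ D 1 = 0 ∧ ∀ c ∈ Set.Ioo (0 : ℝ) 1, D c < 0 :=
  stmt12_general p hp x hx hxeq D hD
end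

section
/- Let p ≥ 4 be an even integer, ξ(q) = q^p/p, so ξ'(q) = q^{p−1} and ξ''(q) = (p−1)q^{p−2}. Suppose β > 0, m ∈ (0,1] and q ∈ (0,1) satisfy the critical point equations β² ξ'(q) = m^{-1}(1/(1−q) − 1/(1−q+mq)) and β² ξ(q) = m^{-2} log((1−q+qm)/(1−q)) − (q/m)·1/(1−q+qm). Then for every u ∈ [q, 1), β²(p−1)u^{p−2} ≤ (1 − q + m(q−u))^{-2} ≤ (1−u)^{-2}; in particular β² ξ''(u) (1−u)² ≤ 1 for all u ∈ [q,1). -/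
/-!
Put `a = 1 - q + m q` and `D(x) = a - m x`, so that `D(q) = 1 - q`. The critical point equations
say that `ψ(x) = β² x^(p-1) - m⁻¹ (D(x)⁻¹ - a⁻¹)` and its primitive `Ψ` with `Ψ(0) = 0` both
vanish at `x = q`. Here `ψ' = φ` with `φ(x) = β² (p-1) x^(p-2) - D(x)⁻²`, which has the sign of
`F(x) - 1` for `F(x) = β² (p-1) x^(p-2) D(x)²`.

If `F(u) > 1` for some `u ∈ [q, 1)`, then, `F` being unimodal on `[0, a/m] ⊇ [0, 1)`, `φ` can only
change sign from negative to positive on `(0, q)`. Hence `ψ < 0` on `(0, q)`, so `Ψ` is strictly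
decreasing on `[0, q]`, contradicting `Ψ(0) = Ψ(q)`. So `F ≤ 1` on `[q, 1)`, and `D(u) ≥ 1 - u`
gives the rest.
-/

open Set Real

section Calculus

variable {f f' : ℝ → ℝ} {a b : ℝ}

lemma strictMonoOn_Icc_of_hasDerivAt_pos (hf : ∀ x ∈ Icc a b, HasDerivAt f (f' x) x)
    (hf' : ∀ x ∈ Ioo a b, 0 < f' x) : StrictMonoOn f (Icc a b) :=
  strictMonoOn_of_hasDerivWithinAt_pos (convex_Icc a b)
    (fun x hx ↦ (hf x hx).continuousAt.continuousWithinAt)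
    (fun x hx ↦ (hf x (interior_subset hx)).hasDerivWithinAt)
    (by simpa only [interior_Icc] using hf')

lemma strictAntiOn_Icc_of_hasDerivAt_neg (hf : ∀ x ∈ Icc a b, HasDerivAt f (f' x) x)
    (hf' : ∀ x ∈ Ioo a b, f' x < 0) : StrictAntiOn f (Icc a b) :=
  strictAntiOn_of_hasDerivWithinAt_neg (convex_Icc a b)
    (fun x hx ↦ (hf x hx).continuousAt.continuousWithinAt)
    (fun x hx ↦ (hf x (interior_subset hx)).hasDerivWithinAt)
    (by simpa only [interior_Icc] using hf')

lemma neg_of_hasDerivAt_of_signChange (hf : ∀ x ∈ Icc a b, HasDerivAt f (f' x) x)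
    (ha : f a ≤ 0) (hb : f b ≤ 0)
    (hf' : ∀ s ∈ Ioo a b, ∀ t ∈ Ioo a b, s < t → 0 ≤ f' s → 0 < f' t) :
    ∀ t ∈ Ioo a b, f t < 0 := by
  intro t ht
  by_cases hs : ∃ s ∈ Ioo a t, 0 ≤ f' s
  · obtain ⟨s, hs, hfs⟩ := hs
    have hmono : StrictMonoOn f (Icc t b) :=
      strictMonoOn_Icc_of_hasDerivAt_pos (fun x hx ↦ hf x ⟨ht.1.le.trans hx.1, hx.2⟩)
        fun x hx ↦ hf' s ⟨hs.1, hs.2.trans ht.2⟩ x ⟨ht.1.trans hx.1, hx.2⟩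
          (hs.2.trans hx.1) hfs
    linarith [hmono (left_mem_Icc.2 ht.2.le) (right_mem_Icc.2 ht.2.le) ht.2]
  · push Not at hs
    have hanti : StrictAntiOn f (Icc a t) :=
      strictAntiOn_Icc_of_hasDerivAt_neg (fun x hx ↦ hf x ⟨hx.1, hx.2.trans ht.2.le⟩) hs
    linarith [hanti (left_mem_Icc.2 ht.1.le) (right_mem_Icc.2 ht.1.le) ht.1]

lemma min_lt_of_strictMonoOn_of_strictAntiOn {c s x t : ℝ}
    (hmono : StrictMonoOn f (Icc a c)) (hanti : StrictAntiOn f (Icc c b))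
    (hs : a ≤ s) (hsx : s < x) (hxt : x < t) (ht : t ≤ b) : min (f s) (f t) < f x := by
  rcases le_total x c with hxc | hcx
  · exact (min_le_left _ _).trans_lt (hmono ⟨hs, hsx.le.trans hxc⟩ ⟨hs.trans hsx.le, hxc⟩ hsx)
  · exact (min_le_right _ _).trans_lt (hanti ⟨hcx, hxt.le.trans ht⟩ ⟨hcx.trans hxt.le, ht⟩ hxt)

end Calculus

section Unimodal

variable {k : ℕ} {b m : ℝ}

lemma hasDerivAt_pow_mul_sub_mul_sq (hk : 1 ≤ k) (x : ℝ) :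
    HasDerivAt (fun y ↦ y ^ k * (b - m * y) ^ 2)
      (x ^ (k - 1) * (b - m * x) * (k * b - (k + 2) * m * x)) x := by
  have hb : HasDerivAt (fun y ↦ b - m * y) (-m) x := by
    simpa using ((hasDerivAt_id x).const_mul m).const_sub b
  refine ((hasDerivAt_pow k x).mul (hb.pow 2)).congr_deriv ?_
  obtain ⟨j, rfl⟩ : ∃ j, k = j + 1 := ⟨k - 1, by omega⟩
  simp only [Nat.add_sub_cancel, pow_succ, Pi.pow_apply]
  push_cast
  ring

lemma strictMonoOn_pow_mul_sub_mul_sq (hk : 1 ≤ k) (hm : 0 < m) :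
    StrictMonoOn (fun y ↦ y ^ k * (b - m * y) ^ 2) (Icc 0 (k * b / ((k + 2) * m))) := by
  refine strictMonoOn_Icc_of_hasDerivAt_pos (fun x _ ↦ hasDerivAt_pow_mul_sub_mul_sq hk x) ?_
  rintro x ⟨hx0, hx⟩
  rw [lt_div_iff₀ (by positivity)] at hx
  have hbx : 0 < b - m * x := by nlinarith [mul_pos hm hx0]
  have : 0 < k * b - (k + 2) * m * x := by linarith
  positivity

lemma strictAntiOn_pow_mul_sub_mul_sq (hk : 1 ≤ k) (hb : 0 ≤ b) (hm : 0 < m) :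
    StrictAntiOn (fun y ↦ y ^ k * (b - m * y) ^ 2) (Icc (k * b / ((k + 2) * m)) (b / m)) := by
  refine strictAntiOn_Icc_of_hasDerivAt_neg (fun x _ ↦ hasDerivAt_pow_mul_sub_mul_sq hk x) ?_
  rintro x ⟨hcx, hx⟩
  have hx0 : 0 < x := lt_of_le_of_lt (by positivity) hcx
  rw [div_lt_iff₀ (by positivity)] at hcx
  rw [lt_div_iff₀ hm] at hx
  have hbx : 0 < b - m * x := by linarith
  have : k * b - (k + 2) * m * x < 0 := by linarith
  have : 0 < x ^ (k - 1) * (b - m * x) := by positivity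
  nlinarith

lemma min_lt_pow_mul_sub_mul_sq (hk : 1 ≤ k) (hm : 0 < m) {s x t : ℝ} (hs : 0 ≤ s) (hsx : s < x)
    (hxt : x < t) (ht : m * t ≤ b) :
    min (s ^ k * (b - m * s) ^ 2) (t ^ k * (b - m * t) ^ 2) < x ^ k * (b - m * x) ^ 2 :=
  min_lt_of_strictMonoOn_of_strictAntiOn (strictMonoOn_pow_mul_sub_mul_sq hk hm)
    (strictAntiOn_pow_mul_sub_mul_sq hk (by nlinarith) hm) hs hsx hxt (by rwa [le_div_iff₀' hm])

end Unimodal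

section CriticalPoint

variable {a c m x : ℝ}

lemma hasDerivAt_mul_pow_sub_inv_sub_inv (k : ℕ) (hm : m ≠ 0) (hx : a - m * x ≠ 0) :
    HasDerivAt (fun y ↦ c * y ^ (k + 1) - m⁻¹ * ((a - m * y)⁻¹ - a⁻¹))
      (c * (k + 1) * x ^ k - ((a - m * x) ^ 2)⁻¹) x := by
  have hD : HasDerivAt (fun y ↦ a - m * y) (-m) x := by
    simpa using ((hasDerivAt_id x).const_mul m).const_sub a
  refine (((hasDerivAt_pow (k + 1) x).const_mul c).sub
    (((hD.inv hx).sub_const a⁻¹).const_mul m⁻¹)).congr_deriv ?_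
  push_cast
  field_simp

lemma hasDerivAt_mul_pow_sub_log_add (k : ℕ) (hm : m ≠ 0) (hx : a - m * x ≠ 0) :
    HasDerivAt (fun y ↦ c * y ^ (k + 2) / (k + 2) - (log a - log (a - m * y)) / m ^ 2 + y / (m * a))
      (c * x ^ (k + 1) - m⁻¹ * ((a - m * x)⁻¹ - a⁻¹)) x := by
  have hD : HasDerivAt (fun y ↦ a - m * y) (-m) x := by
    simpa using ((hasDerivAt_id x).const_mul m).const_sub a
  refine ((((hasDerivAt_pow (k + 2) x).const_mul c).div_const _).sub
    (((hD.log hx).const_sub (log a)).div_const _) |>.add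
    ((hasDerivAt_id x).div_const _)).congr_deriv ?_
  push_cast
  field_simp
  ring

end CriticalPoint

theorem mul_pow_mul_sq_le_one_of_critical {k : ℕ} {β m q u : ℝ} (hk : 1 ≤ k)
    (hm0 : 0 < m) (hm1 : m ≤ 1) (hq0 : 0 < q) (hq1 : q < 1)
    (hc1 : β ^ 2 * q ^ (k + 1) = m⁻¹ * (1 / (1 - q) - 1 / (1 - q + m * q)))
    (hc2 : β ^ 2 * (q ^ (k + 2) / (k + 2))
      = 1 / m ^ 2 * log ((1 - q + q * m) / (1 - q)) - q / m * (1 / (1 - q + q * m)))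
    (hqu : q ≤ u) (hu1 : u < 1) :
    β ^ 2 * (k + 1) * (u ^ k * (1 - q + m * (q - u)) ^ 2) ≤ 1 := by
  set a := 1 - q + m * q
  have hD : ∀ x < 1, 0 < a - m * x := fun x hx ↦ by nlinarith
  have haq : a - m * q = 1 - q := by ring
  rw [show 1 - q + m * (q - u) = a - m * u by ring]
  rw [show 1 - q + q * m = a by ring] at hc2
  by_contra! hu
  set C := β ^ 2 * (k + 1)
  have hC : 0 < C := lt_of_le_of_ne (by positivity) fun h ↦ by
    rw [← h, zero_mul] at hu; linarith
  set ψ := fun y ↦ β ^ 2 * y ^ (k + 1) - m⁻¹ * ((a - m * y)⁻¹ - a⁻¹) with hψ_def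
  set φ := fun y ↦ C * y ^ k - ((a - m * y) ^ 2)⁻¹ with hφ_def
  have hψ : ∀ x ∈ Icc 0 q, HasDerivAt ψ (φ x) x := fun x hx ↦
    hasDerivAt_mul_pow_sub_inv_sub_inv k hm0.ne' (hD x (hx.2.trans_lt hq1)).ne'
  have hΨ : ∀ x ∈ Icc 0 q, HasDerivAt
      (fun y ↦ β ^ 2 * y ^ (k + 2) / (k + 2) - (log a - log (a - m * y)) / m ^ 2 + y / (m * a))
      (ψ x) x := fun x hx ↦
    hasDerivAt_mul_pow_sub_log_add k hm0.ne' (hD x (hx.2.trans_lt hq1)).ne'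
  have hφ_sign : ∀ x < 1, 0 ≤ φ x ↔ 1 ≤ C * (x ^ k * (a - m * x) ^ 2) := fun x hx ↦ by
    rw [hφ_def, sub_nonneg, inv_le_iff_one_le_mul₀ (by positivity [hD x hx]), mul_assoc]
  have hφ : ∀ s ∈ Ioo 0 q, ∀ t ∈ Ioo 0 q, s < t → 0 ≤ φ s → 0 < φ t := by
    intro s hs t ht hst hφs
    have ht1 : t < 1 := ht.2.trans hq1
    rw [hφ_sign s (hs.2.trans hq1)] at hφs
    rw [hφ_def, sub_pos, inv_lt_iff_one_lt_mul₀ (by positivity [hD t ht1]), mul_assoc]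
    have hmin := min_lt_pow_mul_sub_mul_sq hk hm0 hs.1.le hst (ht.2.trans_le hqu)
      (sub_pos.1 (hD u hu1)).le
    calc 1 ≤ C * min (s ^ k * (a - m * s) ^ 2) (u ^ k * (a - m * u) ^ 2) := by
          rw [mul_min_of_nonneg _ _ hC.le]; exact le_min hφs hu.le
      _ < C * (t ^ k * (a - m * t) ^ 2) := mul_lt_mul_of_pos_left hmin hC
  have hψ_neg := neg_of_hasDerivAt_of_signChange hψ (by simp [hψ_def])
    (by simp [hψ_def, haq, hc1]) hφ
  have hΨ_lt := strictAntiOn_Icc_of_hasDerivAt_neg hΨ hψ_neg (left_mem_Icc.2 hq0.le)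
    (right_mem_Icc.2 hq0.le) hq0
  have hlog : log (a / (1 - q)) = log a - log (1 - q) := log_div (by positivity) (by linarith)
  simp only [haq, ← hlog] at hΨ_lt
  rw [mul_div_assoc, hc2] at hΨ_lt
  ring_nf at hΨ_lt
  exact lt_irrefl _ hΨ_lt

theorem stmt13_general (p : ℕ) (hp : 4 ≤ p) (β m q : ℝ)
    (hm : m ∈ Set.Ioc (0 : ℝ) 1) (hq : q ∈ Set.Ioo (0 : ℝ) 1)
    (hc1 : β ^ 2 * q ^ (p - 1) = m⁻¹ * (1 / (1 - q) - 1 / (1 - q + m * q)))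
    (hc2 : β ^ 2 * (q ^ p / p)
      = (1 / m ^ 2) * Real.log ((1 - q + q * m) / (1 - q)) - (q / m) * (1 / (1 - q + q * m))) :
    ∀ u ∈ Set.Ico q 1,
      β ^ 2 * ((p : ℝ) - 1) * u ^ (p - 2) ≤ ((1 - q + m * (q - u)) ^ 2)⁻¹ ∧
      ((1 - q + m * (q - u)) ^ 2)⁻¹ ≤ ((1 - u) ^ 2)⁻¹ ∧
      β ^ 2 * (((p : ℝ) - 1) * u ^ (p - 2)) * (1 - u) ^ 2 ≤ 1 := by
  rintro u ⟨hqu, hu1⟩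
  obtain ⟨k, rfl⟩ : ∃ k, p = k + 2 := ⟨p - 2, by omega⟩
  have hcast : ((k + 2 : ℕ) : ℝ) - 1 = k + 1 := by push_cast; ring
  simp only [Nat.add_sub_cancel, hcast] at hc1 hc2 ⊢
  push_cast at hc2
  have hbound := mul_pow_mul_sq_le_one_of_critical (by omega) hm.1 hm.2 hq.1 hq.2 hc1 hc2 hqu hu1
  have h1u : 0 < 1 - u := by linarith
  have hgap : 1 - u ≤ 1 - q + m * (q - u) := by nlinarith [hm.2]
  have hfirst : β ^ 2 * (k + 1) * u ^ k ≤ ((1 - q + m * (q - u)) ^ 2)⁻¹ := by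
    rw [← one_div, le_div_iff₀ (pow_pos (h1u.trans_le hgap) 2), mul_assoc]
    exact hbound
  have hsecond : ((1 - q + m * (q - u)) ^ 2)⁻¹ ≤ ((1 - u) ^ 2)⁻¹ :=
    inv_anti₀ (by positivity) (pow_le_pow_left₀ h1u.le hgap 2)
  refine ⟨hfirst, hsecond, ?_⟩
  rw [← mul_assoc, ← le_div_iff₀ (by positivity), one_div]
  exact hfirst.trans hsecond

theorem stmt13 (p : ℕ) (hp : 4 ≤ p) (hpe : Even p) (β m q : ℝ)
    (hβ : 0 < β) (hm : m ∈ Set.Ioc (0 : ℝ) 1) (hq : q ∈ Set.Ioo (0 : ℝ) 1)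
    (hc1 : β ^ 2 * q ^ (p - 1) = m⁻¹ * (1 / (1 - q) - 1 / (1 - q + m * q)))
    (hc2 : β ^ 2 * (q ^ p / p)
      = (1 / m ^ 2) * Real.log ((1 - q + q * m) / (1 - q)) - (q / m) * (1 / (1 - q + q * m))) :
    ∀ u ∈ Set.Ico q 1,
      β ^ 2 * ((p : ℝ) - 1) * u ^ (p - 2) ≤ ((1 - q + m * (q - u)) ^ 2)⁻¹ ∧
      ((1 - q + m * (q - u)) ^ 2)⁻¹ ≤ ((1 - u) ^ 2)⁻¹ ∧
      β ^ 2 * (((p : ℝ) - 1) * u ^ (p - 2)) * (1 - u) ^ 2 ≤ 1 :=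
  stmt13_general p hp β m q hm hq hc1 hc2
end
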